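/- arXiv:2008.01481 — 2 statements merged into one kernel-verified Lean document; each statement's English description precedes it below -/
import Mathlib

section
/- Let p, a ∈ [0, 1] and let u, v be unit vectors in a complex inner product space H with an orthogonal projection P such that ‖P u‖² = p and ‖P v‖² = a. Then ‖u - v‖² ≥ 2 - 2·(√(p·a) + √((1-p)·(1-a))). -/
local notation "⟪" x ", " y "⟫_ℂ" => @inner ℂ _ _ x y

theorem stmt6 {H : Type*} [NormedAddCommGroup H] [InnerProductSpace ℂ H]
    (K : Submodule ℂ H) [CompleteSpace K]
    (p a : ℝ) (hp : p ∈ Set.Icc (0:ℝ) 1) (ha : a ∈ Set.Icc (0:ℝ) 1)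
    (u v : H) (hu : ‖u‖ = 1) (hv : ‖v‖ = 1)
    (hpu : ‖(Submodule.orthogonalProjectionOnto K u : H)‖ ^ 2 = p)
    (hav : ‖(Submodule.orthogonalProjectionOnto K v : H)‖ ^ 2 = a) :
    ‖u - v‖ ^ 2 ≥ 2 - 2 * (Real.sqrt (p * a) + Real.sqrt ((1 - p) * (1 - a))) := by
  set Pu : H := (Submodule.orthogonalProjectionOnto K u : H) with hPu
  set Pv : H := (Submodule.orthogonalProjectionOnto K v : H) with hPv
  have huo : u - Pu ∈ Kᗮ := Submodule.sub_starProjection_mem_orthogonal (K := K) u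
  have hvo : v - Pv ∈ Kᗮ := Submodule.sub_starProjection_mem_orthogonal (K := K) v
  have hPuK : Pu ∈ K := (Submodule.orthogonalProjectionOnto K u).2
  have hPvK : Pv ∈ K := (Submodule.orthogonalProjectionOnto K v).2
  -- Pythagoras
  have pyth : ∀ (w : H) (Pw : H), Pw ∈ K → w - Pw ∈ Kᗮ →
      ‖w‖ ^ 2 = ‖Pw‖ ^ 2 + ‖w - Pw‖ ^ 2 := by
    intro w Pw hPw hwo
    have h0 : ⟪Pw, w - Pw⟫_ℂ = 0 := hwo Pw hPw
    have := norm_add_sq (𝕜 := ℂ) Pw (w - Pw)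
    rw [h0] at this
    simp only [map_zero, mul_zero, add_zero, zero_mul] at this
    simpa using this
  have hup : ‖u - Pu‖ ^ 2 = 1 - p := by
    have := pyth u Pu hPuK huo
    rw [hu, hpu] at this; nlinarith
  have hvp : ‖v - Pv‖ ^ 2 = 1 - a := by
    have := pyth v Pv hPvK hvo
    rw [hv, hav] at this; nlinarith
  have hnn : (0:ℝ) ≤ ‖u - Pu‖ := norm_nonneg _
  have hnn' : (0:ℝ) ≤ ‖v - Pv‖ := norm_nonneg _
  have hupn : ‖u - Pu‖ = Real.sqrt (1 - p) := by
    rw [← hup, Real.sqrt_sq hnn]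
  have hvpn : ‖v - Pv‖ = Real.sqrt (1 - a) := by
    rw [← hvp, Real.sqrt_sq hnn']
  have hPun : ‖Pu‖ = Real.sqrt p := by
    rw [← hpu, Real.sqrt_sq (norm_nonneg _)]
  have hPvn : ‖Pv‖ = Real.sqrt a := by
    rw [← hav, Real.sqrt_sq (norm_nonneg _)]
  -- inner product decomposition
  have hdecomp : ⟪u, v⟫_ℂ = ⟪Pu, Pv⟫_ℂ + ⟪u - Pu, v - Pv⟫_ℂ := by
    have h1 : ⟪Pu, v - Pv⟫_ℂ = 0 := hvo Pu hPuK
    have h2 : ⟪u - Pu, Pv⟫_ℂ = 0 := by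
      rw [← inner_conj_symm, huo Pv hPvK, map_zero]
    calc ⟪u, v⟫_ℂ = ⟪Pu + (u - Pu), Pv + (v - Pv)⟫_ℂ := by
            congr 1 <;> abel
      _ = ⟪Pu, Pv⟫_ℂ + ⟪Pu, v - Pv⟫_ℂ + (⟪u - Pu, Pv⟫_ℂ + ⟪u - Pu, v - Pv⟫_ℂ) := by
            simp only [inner_add_left, inner_add_right]; ring
      _ = ⟪Pu, Pv⟫_ℂ + ⟪u - Pu, v - Pv⟫_ℂ := by rw [h1, h2]; ring
  have hre : Complex.re ⟪u, v⟫_ℂ ≤ Real.sqrt (p * a) + Real.sqrt ((1 - p) * (1 - a)) := by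
    have keyle : ∀ x y : H, Complex.re ⟪x, y⟫_ℂ ≤ ‖x‖ * ‖y‖ := fun x y =>
      (Complex.re_le_norm _).trans (by exact norm_inner_le_norm _ _)
    have c1 := keyle Pu Pv
    have c2 := keyle (u - Pu) (v - Pv)
    have : Complex.re ⟪u, v⟫_ℂ = Complex.re ⟪Pu, Pv⟫_ℂ + Complex.re ⟪u - Pu, v - Pv⟫_ℂ := by
      rw [hdecomp, Complex.add_re]
    rw [this, hPun, hPvn, hupn, hvpn,
      ← Real.sqrt_mul hp.1, ← Real.sqrt_mul (by linarith [hp.2] : (0:ℝ) ≤ 1 - p)] at *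
    linarith
  have hns : ‖u - v‖ ^ 2 = 2 - 2 * Complex.re ⟪u, v⟫_ℂ := by
    have := norm_sub_sq (𝕜 := ℂ) u v
    rw [hu, hv] at this
    rw [this]; simp only [RCLike.re_to_complex]; ring
  rw [hns]
  linarith
end

section
/- Let N ≥ n ≥ 1 be naturals, ν ∈ [0, π/2] with sin²ν = n/N, and J ∈ ℕ. Let p ∈ [0,1]. If (1/D)·∑_{y=1}^D ‖u - v_y‖² ≤ 4·sin²(J·ν) holds for unit vectors u, v_1, …, v_D (D = C(N,n)) and additionally 2 − 2·√(p·n/N) − 2·√((1−p)·(1−n/N)) ≤ (1/D)·∑_{y=1}^D ‖u − v_y‖², then √(p·n/N) + √((1−p)·(1−n/N)) ≥ cos(2·J·ν). In particular, if 2Jν + ν ≤ π/2 then p ≤ sin²((2J+1)·ν). -/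
open Real

theorem stmt15 {H : Type*} [NormedAddCommGroup H] [InnerProductSpace ℂ H]
    (N n : ℕ) (hn : 1 ≤ n) (hnN : n ≤ N) (ν : ℝ) (hν : ν ∈ Set.Icc 0 (π / 2))
    (hsin : Real.sin ν ^ 2 = (n : ℝ) / N) (J : ℕ) (p : ℝ) (hp : p ∈ Set.Icc (0:ℝ) 1)
    (D : ℕ) (hD : D = N.choose n)
    (u : H) (v : Fin D → H) (hu : ‖u‖ = 1) (hv : ∀ y, ‖v y‖ = 1)
    (h1 : (1 / D : ℝ) * ∑ y, ‖u - v y‖ ^ 2 ≤ 4 * Real.sin (J * ν) ^ 2)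
    (h2 : 2 - 2 * Real.sqrt (p * n / N) - 2 * Real.sqrt ((1 - p) * (1 - (n : ℝ) / N))
        ≤ (1 / D : ℝ) * ∑ y, ‖u - v y‖ ^ 2) :
    Real.sqrt (p * n / N) + Real.sqrt ((1 - p) * (1 - (n : ℝ) / N))
        ≥ Real.cos (2 * J * ν) ∧
    (2 * J * ν + ν ≤ π / 2 → p ≤ Real.sin ((2 * J + 1) * ν) ^ 2) := by
  obtain ⟨hν0, hν2⟩ := hν
  obtain ⟨hp0, hp1⟩ := hp
  have hcos2 : Real.cos (2 * J * ν) = 1 - 2 * Real.sin (J * ν) ^ 2 := by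
    have : (2 : ℝ) * J * ν = 2 * (J * ν) := by ring
    rw [this, Real.cos_two_mul']
    linarith [Real.sin_sq_add_cos_sq (J * ν)]
  have hmain : Real.sqrt (p * n / N) + Real.sqrt ((1 - p) * (1 - (n : ℝ) / N))
      ≥ Real.cos (2 * J * ν) := by
    have := le_trans h2 h1
    rw [hcos2]; linarith
  refine ⟨hmain, fun hJν => ?_⟩
  -- rewrite the sqrt expressions
  have hsν : Real.sin ν ≥ 0 := Real.sin_nonneg_of_nonneg_of_le_pi hν0 (by linarith [Real.pi_pos])
  have hcν : Real.cos ν ≥ 0 := Real.cos_nonneg_of_mem_Icc ⟨by linarith, hν2⟩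
  have ha : Real.sqrt (p * n / N) = Real.sqrt p * Real.sin ν := by
    have : p * n / N = p * ((n : ℝ) / N) := by ring
    rw [this, ← hsin, Real.sqrt_mul hp0, Real.sqrt_sq hsν]
  have hb : Real.sqrt ((1 - p) * (1 - (n : ℝ) / N)) = Real.sqrt (1 - p) * Real.cos ν := by
    have h1n : 1 - (n : ℝ) / N = Real.cos ν ^ 2 := by
      have := Real.sin_sq_add_cos_sq ν
      rw [hsin] at this; linarith
    rw [h1n, Real.sqrt_mul (by linarith), Real.sqrt_sq hcν]
  set θ := Real.arcsin (Real.sqrt p) with hθdef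
  have hsp1 : Real.sqrt p ≤ 1 := by
    rw [show (1:ℝ) = Real.sqrt 1 by simp]
    exact Real.sqrt_le_sqrt hp1
  have hsθ : Real.sin θ = Real.sqrt p :=
    Real.sin_arcsin (by linarith [Real.sqrt_nonneg p]) hsp1
  have hcθ : Real.cos θ = Real.sqrt (1 - p) := by
    rw [hθdef, Real.cos_arcsin, Real.sq_sqrt hp0]
  have hθ0 : 0 ≤ θ := Real.arcsin_nonneg.2 (Real.sqrt_nonneg p)
  have hθpi2 : θ ≤ π / 2 := Real.arcsin_le_pi_div_two _
  have hsum : Real.sqrt (p * n / N) + Real.sqrt ((1 - p) * (1 - (n : ℝ) / N))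
      = Real.cos (θ - ν) := by
    rw [ha, hb, Real.cos_sub, hsθ, hcθ]; ring
  have hcoscos : Real.cos (2 * J * ν) ≤ Real.cos (θ - ν) := by
    rw [← hsum]; exact hmain
  have hJν0 : 0 ≤ 2 * (J : ℝ) * ν := by positivity
  -- |θ - ν| ≤ 2 J ν
  have habs : |θ - ν| ≤ 2 * J * ν := by
    by_contra hcon
    push_neg at hcon
    have h1' : Real.cos |θ - ν| < Real.cos (2 * J * ν) := by
      apply Real.cos_lt_cos_of_nonneg_of_le_pi hJν0 _ hcon
      have : |θ - ν| ≤ π / 2 := by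
        rw [abs_le]; constructor <;> linarith
      linarith [Real.pi_pos]
    rw [Real.cos_abs] at h1'
    linarith
  have hθle : θ ≤ (2 * J + 1) * ν := by
    have := (abs_le.1 habs).2
    nlinarith
  have hsinle : Real.sin θ ≤ Real.sin ((2 * J + 1) * ν) := by
    apply Real.sin_le_sin_of_le_of_le_pi_div_two (by linarith) _ hθle
    push_cast
    linarith
  rw [hsθ] at hsinle
  calc p = Real.sqrt p ^ 2 := (Real.sq_sqrt hp0).symm
    _ ≤ Real.sin ((2 * J + 1) * ν) ^ 2 := by
        apply pow_le_pow_left₀ (Real.sqrt_nonneg p) hsinle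
end
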